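/- arXiv:2204.13771 — 3 statements merged into one kernel-verified Lean document; each statement's English description precedes it below -/
import Mathlib

section
/- Define Â(y) = ∫_{ℝ^d} (1 − cos⟨z,y⟩) a(z) dz, 𝓜(a) = min_{|θ|=1} ∫ a(z)⟨z,θ⟩² dz, and r(a) = (3/2) 𝓜(a) / M₃(a). Then for every y ∈ ℝ^d with |y| ≤ r(a) one has Â(y) ≥ (1/4) 𝓜(a) |y|². -/
open MeasureTheory Real
open scoped ENNReal

noncomputable section

abbrev Euc (d : ℕ) := EuclideanSpace ℝ (Fin d)

/-- The symbol `Â(y) = ∫ (1 - cos⟨z,y⟩) a(z) dz`. -/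
def Ahat {d : ℕ} (a : Euc d → ℝ) (y : Euc d) : ℝ :=
  ∫ z : Euc d, (1 - Real.cos (@inner ℝ _ _ z y)) * a z

/-- The quadratic moment `M_a(y) = ∫ a(z) ⟨z,y⟩² dz`. -/
def Mquad {d : ℕ} (a : Euc d → ℝ) (y : Euc d) : ℝ :=
  ∫ z : Euc d, a z * (@inner ℝ _ _ z y) ^ 2


lemma sin_deriv_aux (x : ℝ) : HasDerivAt (fun t : ℝ => Real.sin t - t + t ^ 2 / 2)
    (Real.cos x - 1 + (2 * x ^ 1) / 2) x :=
  ((Real.hasDerivAt_sin x).sub (hasDerivAt_id x)).add ((hasDerivAt_pow 2 x).div_const 2)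

lemma sin_ge_sub_sq {t : ℝ} (ht : 0 ≤ t) : t - t ^ 2 / 2 ≤ Real.sin t := by
  have key : MonotoneOn (fun t : ℝ => Real.sin t - t + t ^ 2 / 2) (Set.Ici 0) := by
    apply monotoneOn_of_deriv_nonneg (convex_Ici 0)
    · exact ((Real.continuous_sin.sub continuous_id).add
        ((continuous_pow 2).div_const 2)).continuousOn
    · intro x _
      exact (sin_deriv_aux x).differentiableAt.differentiableWithinAt
    · intro x hx
      have hx0 : (0:ℝ) < x := by simpa using hx
      rw [(sin_deriv_aux x).deriv]
      have h1 : 1 - Real.cos x ≤ x := by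
        rcases le_or_gt x 2 with h | h
        · nlinarith [Real.one_sub_sq_div_two_le_cos (x := x)]
        · nlinarith [Real.neg_one_le_cos x]
      nlinarith
  have := key (Set.self_mem_Ici) ht ht
  simp only [Real.sin_zero] at this
  nlinarith [this]

lemma cos_deriv_aux (x : ℝ) : HasDerivAt (fun t : ℝ => 1 - Real.cos t - t ^ 2 / 2 + t ^ 3 / 6)
    (0 - -Real.sin x - (2 * x ^ 1) / 2 + (3 * x ^ 2) / 6) x :=
  (((hasDerivAt_const x (1:ℝ)).sub (Real.hasDerivAt_cos x)).sub
    ((hasDerivAt_pow 2 x).div_const 2)).add ((hasDerivAt_pow 3 x).div_const 6)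

lemma one_sub_cos_ge {t : ℝ} : t ^ 2 / 2 - |t| ^ 3 / 6 ≤ 1 - Real.cos t := by
  have main : ∀ s : ℝ, 0 ≤ s → s ^ 2 / 2 - s ^ 3 / 6 ≤ 1 - Real.cos s := by
    intro s hs
    have key : MonotoneOn (fun t : ℝ => 1 - Real.cos t - t ^ 2 / 2 + t ^ 3 / 6) (Set.Ici 0) := by
      apply monotoneOn_of_deriv_nonneg (convex_Ici 0)
      · exact (((continuous_const.sub Real.continuous_cos).sub
          ((continuous_pow 2).div_const 2)).add ((continuous_pow 3).div_const 6)).continuousOn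
      · intro x _
        exact (cos_deriv_aux x).differentiableAt.differentiableWithinAt
      · intro x hx
        have hx0 : (0:ℝ) < x := by simpa using hx
        rw [(cos_deriv_aux x).deriv]
        have := sin_ge_sub_sq hx0.le
        nlinarith
    have := key (Set.self_mem_Ici) hs hs
    simp only [Real.cos_zero] at this
    nlinarith [this]
  rcases le_or_gt 0 t with h | h
  · rw [abs_of_nonneg h]; exact main t h
  · have := main (-t) (by linarith)
    rw [abs_of_neg h]
    rw [Real.cos_neg] at this
    nlinarith [this]

/-- Near the origin the symbol dominates the quadratic form: if `𝓜(a)` is the minimum of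
`M_a` over the unit sphere and `r(a) = (3/2) 𝓜(a) / M₃(a)`, then
`Â(y) ≥ (1/4) 𝓜(a) |y|²` for `|y| ≤ r(a)`. -/
theorem stmt9 {d : ℕ} (hd : 1 ≤ d)
    (a : Euc d → ℝ)
    (ha_int : Integrable a)
    (ha_nn : ∀ᵐ x : Euc d, 0 ≤ a x)
    (ha_even : ∀ x : Euc d, a (-x) = a x)
    (ha_supp : 0 < volume {x : Euc d | a x ≠ 0})
    (hM1 : Integrable fun x : Euc d => ‖x‖ ^ 1 * a x)
    (hM2 : Integrable fun x : Euc d => ‖x‖ ^ 2 * a x)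
    (hM3 : Integrable fun x : Euc d => ‖x‖ ^ 3 * a x)
    (Ma : ℝ) (hMa : IsLeast (Mquad a '' {θ : Euc d | ‖θ‖ = 1}) Ma) :
    ∀ y : Euc d, ‖y‖ ≤ (3 / 2) * Ma / (∫ z : Euc d, ‖z‖ ^ 3 * a z) →
      (1 / 4) * Ma * ‖y‖ ^ 2 ≤ Ahat a y := by
  intro y hy
  set M3 : ℝ := ∫ z : Euc d, ‖z‖ ^ 3 * a z with hM3def
  have ham : AEStronglyMeasurable a volume := ha_int.1
  have hcont : Continuous fun z : Euc d => (inner ℝ z y : ℝ) :=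
    continuous_id.inner continuous_const
  -- Ma ≥ 0
  have hMa0 : 0 ≤ Ma := by
    obtain ⟨θ, hθ, hθeq⟩ := hMa.1
    rw [← hθeq]
    exact integral_nonneg_of_ae (ha_nn.mono fun z hz => mul_nonneg hz (sq_nonneg _))
  -- M3 ≥ 0
  have hM30 : 0 ≤ M3 :=
    integral_nonneg_of_ae (ha_nn.mono fun z hz => mul_nonneg (pow_nonneg (norm_nonneg _) 3) hz)
  -- integrability of the three integrands
  have hf1 : Integrable fun z : Euc d => (1 - Real.cos (inner ℝ z y)) * a z := by
    apply Integrable.mono' (ha_int.norm.const_mul 2)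
      (((continuous_const.sub (Real.continuous_cos.comp hcont)).aestronglyMeasurable).mul ham)
    filter_upwards with z
    simp only [Pi.mul_apply, Pi.sub_apply, Function.comp_apply]
    rw [norm_mul]
    gcongr
    rw [Real.norm_eq_abs, abs_le]
    constructor <;> nlinarith [Real.neg_one_le_cos (inner ℝ z y : ℝ), Real.cos_le_one (inner ℝ z y : ℝ)]
  have hf2 : Integrable fun z : Euc d => a z * (inner ℝ z y : ℝ) ^ 2 := by
    apply Integrable.mono' (hM2.norm.const_mul (‖y‖ ^ 2))
      (ham.mul ((hcont.pow 2).aestronglyMeasurable))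
    filter_upwards with z
    have h := abs_real_inner_le_norm z y
    simp only [Pi.mul_apply, Pi.pow_apply]
    rw [norm_mul, Real.norm_eq_abs ((inner ℝ z y : ℝ) ^ 2), abs_pow, norm_mul]
    have : |(inner ℝ z y : ℝ)| ^ 2 ≤ ‖z‖ ^ 2 * ‖y‖ ^ 2 := by
      rw [← mul_pow]; exact pow_le_pow_left₀ (abs_nonneg _) h 2
    calc ‖a z‖ * |(inner ℝ z y : ℝ)| ^ 2 ≤ ‖a z‖ * (‖z‖ ^ 2 * ‖y‖ ^ 2) := by
          exact mul_le_mul_of_nonneg_left this (norm_nonneg _)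
      _ = ‖y‖ ^ 2 * (‖(‖z‖ ^ 2 : ℝ)‖ * ‖a z‖) := by
          rw [norm_pow, norm_norm]; ring
  have hf3 : Integrable fun z : Euc d => a z * |(inner ℝ z y : ℝ)| ^ 3 := by
    apply Integrable.mono' (hM3.norm.const_mul (‖y‖ ^ 3))
      (ham.mul (((hcont.abs).pow 3).aestronglyMeasurable))
    filter_upwards with z
    have h := abs_real_inner_le_norm z y
    simp only [Pi.mul_apply, Pi.pow_apply]
    rw [norm_mul, norm_mul, Real.norm_eq_abs (|(inner ℝ z y : ℝ)| ^ 3), abs_pow, abs_abs]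
    have : |(inner ℝ z y : ℝ)| ^ 3 ≤ ‖z‖ ^ 3 * ‖y‖ ^ 3 := by
      rw [← mul_pow]; exact pow_le_pow_left₀ (abs_nonneg _) h 3
    calc ‖a z‖ * |(inner ℝ z y : ℝ)| ^ 3 ≤ ‖a z‖ * (‖z‖ ^ 3 * ‖y‖ ^ 3) :=
          mul_le_mul_of_nonneg_left this (norm_nonneg _)
      _ = ‖y‖ ^ 3 * (‖(‖z‖ ^ 3 : ℝ)‖ * ‖a z‖) := by
          rw [norm_pow, norm_norm]; ring
  set I3 : ℝ := ∫ z : Euc d, a z * |(inner ℝ z y : ℝ)| ^ 3 with hI3def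
  -- lower bound for Ahat
  have step1 : Mquad a y / 2 - I3 / 6 ≤ Ahat a y := by
    have hsub : Integrable fun z : Euc d =>
        a z * (inner ℝ z y : ℝ) ^ 2 / 2 - a z * |(inner ℝ z y : ℝ)| ^ 3 / 6 :=
      (hf2.div_const 2).sub (hf3.div_const 6)
    have := integral_mono_ae hsub hf1 (ha_nn.mono fun z hz => by
      have hkey := one_sub_cos_ge (t := (inner ℝ z y : ℝ))
      nlinarith [hkey, hz])
    rw [integral_sub (hf2.div_const 2) (hf3.div_const 6), integral_div, integral_div] at this
    exact this
  -- Mquad lower bound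
  have step2 : Ma * ‖y‖ ^ 2 ≤ Mquad a y := by
    rcases eq_or_ne y 0 with rfl | hy0
    · simp [Mquad]
    · set θ : Euc d := ‖y‖⁻¹ • y with hθdef
      have hny : (0:ℝ) < ‖y‖ := norm_pos_iff.mpr hy0
      have hθ : ‖θ‖ = 1 := by
        rw [hθdef, norm_smul, norm_inv, norm_norm, inv_mul_cancel₀ hny.ne']
      have hle : Ma ≤ Mquad a θ := hMa.2 ⟨θ, hθ, rfl⟩
      have hscale : Mquad a y = ‖y‖ ^ 2 * Mquad a θ := by
        rw [Mquad, Mquad, ← integral_const_mul]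
        congr 1
        ext z
        have : (inner ℝ z y : ℝ) = ‖y‖ * (inner ℝ z θ : ℝ) := by
          rw [hθdef, real_inner_smul_right]
          field_simp
        rw [this]
        ring
      rw [hscale]
      calc Ma * ‖y‖ ^ 2 ≤ Mquad a θ * ‖y‖ ^ 2 := by
            exact mul_le_mul_of_nonneg_right hle (sq_nonneg _)
        _ = ‖y‖ ^ 2 * Mquad a θ := by ring
  -- I3 upper bound
  have step3 : I3 ≤ ‖y‖ ^ 3 * M3 := by
    rw [hI3def, hM3def, ← integral_const_mul]
    apply integral_mono_ae hf3 (hM3.const_mul _)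
    filter_upwards [ha_nn] with z hz
    have h := abs_real_inner_le_norm z y
    have : |(inner ℝ z y : ℝ)| ^ 3 ≤ ‖z‖ ^ 3 * ‖y‖ ^ 3 := by
      rw [← mul_pow]; exact pow_le_pow_left₀ (abs_nonneg _) h 3
    nlinarith [hz]
  -- final arithmetic
  rcases eq_or_lt_of_le hM30 with hM3z | hM3p
  · have : I3 ≤ 0 := by rw [← hM3z] at step3; simpa using step3
    have hI30 : 0 ≤ I3 :=
      integral_nonneg_of_ae (ha_nn.mono fun z hz =>
        mul_nonneg hz (pow_nonneg (abs_nonneg _) 3))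
    nlinarith [step1, step2, sq_nonneg ‖y‖]
  · have hyM3 : ‖y‖ * M3 ≤ (3/2) * Ma := by
      rw [le_div_iff₀ hM3p] at hy
      linarith
    have hyn : (0:ℝ) ≤ ‖y‖ := norm_nonneg y
    nlinarith [step1, step2, step3, sq_nonneg ‖y‖, mul_le_mul_of_nonneg_left hyM3 (sq_nonneg ‖y‖)]
end
end

section
/- Define Â(y) = ∫_{ℝ^d} (1 − cos⟨z,y⟩) a(z) dz, 𝒜_r(a) = min_{|y| ≥ r} Â(y) for r > 0, 𝓜(a) = min_{|θ|=1} ∫ a(z)⟨z,θ⟩² dz, r(a) = (3/2) 𝓜(a) / M₃(a), and C(a) = min{ (1/4)𝓜(a), 𝒜_{r(a)}(a) π^{-2} d^{-1}, 𝒜_π(a) π^{-2} d^{-1} } > 0. Then: (i) for all ξ ∈ [−π,π)^d and all n ∈ ℤ^d, Â(ξ + 2πn) ≥ C(a) |ξ|²; and (ii) for all ξ ∈ [−π,π)^d and all n ∈ ℤ^d with n ≠ 0, Â(ξ + 2πn) ≥ 𝒜_π(a). -/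
open MeasureTheory Real
open scoped ENNReal

noncomputable section

/-- The lattice vector `2πn ∈ ℝ^d` for `n ∈ ℤ^d`. -/
def latVec {d : ℕ} (n : Fin d → ℤ) : Euc d :=
  (WithLp.equiv 2 (Fin d → ℝ)).symm fun i => 2 * Real.pi * (n i : ℝ)

/-! ### Auxiliary elementary lemmas -/

lemma aux_sin_ge (x : ℝ) (hx : 0 ≤ x) : x - x^2/2 ≤ Real.sin x := by
  set g : ℝ → ℝ := fun x => Real.sin x - x + x^2/2 with hg
  have hd : ∀ y : ℝ, HasDerivAt g (Real.cos y - 1 + y) y := by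
    intro y
    have := ((Real.hasDerivAt_sin y).sub (hasDerivAt_id y)).add
      ((hasDerivAt_pow 2 y).div_const 2)
    exact this.congr_deriv (by norm_num)
  have hmono : MonotoneOn g (Set.Ici 0) := by
    apply monotoneOn_of_deriv_nonneg (convex_Ici 0)
      (fun y _ => (hd y).continuousAt.continuousWithinAt)
      (fun y _ => ((hd y).differentiableAt).differentiableWithinAt)
    intro y hy
    rw [(hd y).deriv]
    rw [interior_Ici, Set.mem_Ioi] at hy
    rcases le_total y 2 with h2 | h2
    · nlinarith [Real.one_sub_sq_div_two_le_cos (x := y)]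
    · nlinarith [Real.neg_one_le_cos y]
  have := hmono (Set.self_mem_Ici) (Set.mem_Ici.2 hx) hx
  simp only [hg] at this
  simp at this
  linarith

lemma aux_cos_le_taylor (x : ℝ) : Real.cos x ≤ 1 - x^2/2 + |x|^3/6 := by
  wlog hx : 0 ≤ x with H
  · have := H (-x) (by linarith [lt_of_not_ge hx])
    simpa using this
  rw [abs_of_nonneg hx]
  set f : ℝ → ℝ := fun x => Real.cos x - 1 + x^2/2 - x^3/6 with hf
  have hd : ∀ y : ℝ, HasDerivAt f (-Real.sin y + y - y^2/2) y := by
    intro y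
    have := (((Real.hasDerivAt_cos y).sub_const 1).add
      ((hasDerivAt_pow 2 y).div_const 2)).sub ((hasDerivAt_pow 3 y).div_const 6)
    exact this.congr_deriv (by norm_num <;> ring)
  have hanti : AntitoneOn f (Set.Ici 0) := by
    apply antitoneOn_of_deriv_nonpos (convex_Ici 0)
      (fun y _ => (hd y).continuousAt.continuousWithinAt)
      (fun y _ => ((hd y).differentiableAt).differentiableWithinAt)
    intro y hy
    rw [(hd y).deriv]
    rw [interior_Ici, Set.mem_Ioi] at hy
    have := aux_sin_ge y hy.le
    linarith
  have := hanti (Set.self_mem_Ici) (Set.mem_Ici.2 hx) hx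
  simp only [hf] at this
  simp at this
  linarith

lemma aux_coord_le_norm {d : ℕ} (x : Euc d) (i : Fin d) : |x i| ≤ ‖x‖ := by
  have h2 : (x i)^2 ≤ ∑ j, ‖x j‖^2 :=
    Finset.single_le_sum (f := fun j => ‖x j‖^2) (fun j _ => by positivity) (Finset.mem_univ i)
      |>.trans_eq' (by simp [sq_abs])
  rw [EuclideanSpace.norm_eq x]
  exact (Real.le_sqrt (abs_nonneg _) (by positivity)).2 (by simpa [sq_abs] using h2)

lemma aux_norm_sq_le {d : ℕ} (ξ : Euc d) (hξ : ∀ i, ξ i ∈ Set.Ico (-Real.pi) Real.pi) :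
    ‖ξ‖^2 ≤ Real.pi^2 * d := by
  rw [EuclideanSpace.norm_eq, Real.sq_sqrt (by positivity)]
  calc ∑ i, ‖ξ i‖^2 ≤ ∑ _i : Fin d, Real.pi^2 := by
        apply Finset.sum_le_sum
        intro i _
        have h := hξ i
        rw [Set.mem_Ico] at h
        rw [Real.norm_eq_abs, sq_abs]
        nlinarith [h.1, h.2]
    _ = Real.pi^2 * d := by
        rw [Finset.sum_const, Finset.card_univ, Fintype.card_fin, nsmul_eq_mul, mul_comm]

lemma aux_norm_latVec {d : ℕ} (ξ : Euc d) (hξ : ∀ i, ξ i ∈ Set.Ico (-Real.pi) Real.pi)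
    (n : Fin d → ℤ) (hn : n ≠ 0) : Real.pi ≤ ‖ξ + latVec n‖ := by
  obtain ⟨i, hi⟩ : ∃ i, n i ≠ 0 := Function.ne_iff.1 hn
  have hcoord : (ξ + latVec n) i = ξ i + 2 * Real.pi * (n i : ℝ) := rfl
  have h1 : |ξ i + 2 * Real.pi * (n i : ℝ)| ≤ ‖ξ + latVec n‖ := by
    rw [← hcoord]; exact aux_coord_le_norm _ i
  have h2 : (1:ℝ) ≤ |(n i : ℝ)| := by exact_mod_cast Int.one_le_abs hi
  have hio := hξ i
  rw [Set.mem_Ico] at hio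
  have hxi : |ξ i| ≤ Real.pi := abs_le.2 ⟨hio.1, hio.2.le⟩
  have habs2 : 2 * Real.pi ≤ |2 * Real.pi * (n i : ℝ)| := by
    rw [abs_mul, abs_of_pos (by positivity : (0:ℝ) < 2 * Real.pi)]
    nlinarith [Real.pi_pos]
  have h3 := abs_sub_abs_le_abs_sub (2 * Real.pi * (n i : ℝ)) (-(ξ i))
  simp only [abs_neg, sub_neg_eq_add] at h3
  have h4 : |2 * Real.pi * (n i : ℝ) + ξ i| = |ξ i + 2 * Real.pi * (n i : ℝ)| := by
    rw [add_comm]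
  rw [h4] at h3
  linarith

/-! ### Null sets -/

lemma aux_hyperplane_null {d : ℕ} (y : Euc d) (hy : y ≠ 0) (c : ℝ) :
    volume {z : Euc d | @inner ℝ _ _ z y = c} = 0 := by
  have hne : ‖y‖^2 ≠ 0 := pow_ne_zero 2 (norm_ne_zero_iff.2 hy)
  set K := LinearMap.ker ((innerSL ℝ y : Euc d →L[ℝ] ℝ) : Euc d →ₗ[ℝ] ℝ) with hK
  have hKnull : volume (K : Set (Euc d)) = 0 := by
    apply Measure.addHaar_submodule
    intro h
    have hy2 : y ∈ K := h ▸ Submodule.mem_top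
    rw [hK, LinearMap.mem_ker] at hy2
    have : @inner ℝ _ _ y y = 0 := hy2
    rw [real_inner_self_eq_norm_sq] at this
    exact hne (by rw [this])
  set z0 : Euc d := (c / ‖y‖^2) • y with hz0
  have hz0c : @inner ℝ _ _ z0 y = c := by
    rw [hz0, real_inner_smul_left, real_inner_self_eq_norm_sq]
    rw [div_mul_eq_mul_div, mul_div_assoc, div_self hne, mul_one]
  have hset : {z : Euc d | @inner ℝ _ _ z y = c} = (fun z => z + (-z0)) ⁻¹' K := by
    ext z
    simp only [Set.mem_setOf_eq, Set.mem_preimage, SetLike.mem_coe, hK, LinearMap.mem_ker]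
    constructor
    · intro h
      show @inner ℝ _ _ y (z + (-z0)) = 0
      rw [inner_add_right, inner_neg_right, real_inner_comm z y, real_inner_comm z0 y, h, hz0c]
      ring
    · intro h
      have : @inner ℝ _ _ y (z + (-z0)) = 0 := h
      rw [inner_add_right, inner_neg_right, real_inner_comm z y, real_inner_comm z0 y, hz0c]
        at this
      linarith
  rw [hset, measure_preimage_add_right]
  exact hKnull

lemma aux_cos_one_null {d : ℕ} (y : Euc d) (hy : y ≠ 0) :
    volume {z : Euc d | Real.cos (@inner ℝ _ _ z y) = 1} = 0 := by
  have hsub : {z : Euc d | Real.cos (@inner ℝ _ _ z y) = 1}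
      ⊆ ⋃ n : ℤ, {z : Euc d | @inner ℝ _ _ z y = (n : ℝ) * (2 * Real.pi)} := by
    intro z hz
    rcases (Real.cos_eq_one_iff _).1 hz with ⟨n, hn⟩
    exact Set.mem_iUnion.2 ⟨n, hn.symm⟩
  exact measure_mono_null hsub (measure_iUnion_null fun n => aux_hyperplane_null y hy _)

/-! ### Positivity of integrals -/

lemma aux_integral_pos {d : ℕ} {a : Euc d → ℝ} (f : Euc d → ℝ) (hf : Integrable f)
    (hnn : ∀ᵐ z : Euc d, 0 ≤ f z)
    (ha_nn : ∀ᵐ x : Euc d, 0 ≤ a x) (ha_supp : 0 < volume {x : Euc d | a x ≠ 0})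
    (S : Set (Euc d)) (hS : volume S = 0)
    (h : ∀ z, a z ≠ 0 → 0 ≤ a z → z ∉ S → f z ≠ 0) :
    0 < ∫ z : Euc d, f z := by
  rw [integral_pos_iff_support_of_nonneg_ae hnn hf]
  have hbad : volume {z : Euc d | ¬ 0 ≤ a z} = 0 := by
    simpa [ae_iff] using ha_nn
  have hsub : {x : Euc d | a x ≠ 0} ⊆
      Function.support f ∪ (S ∪ {z : Euc d | ¬ 0 ≤ a z}) := by
    intro z hz
    by_cases hzS : z ∈ S
    · exact Or.inr (Or.inl hzS)
    by_cases hza : 0 ≤ a z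
    · exact Or.inl (h z hz hza hzS)
    · exact Or.inr (Or.inr hza)
  calc (0:ℝ≥0∞) < volume {x : Euc d | a x ≠ 0} := ha_supp
    _ ≤ volume (Function.support f ∪ (S ∪ {z : Euc d | ¬ 0 ≤ a z})) := measure_mono hsub
    _ ≤ volume (Function.support f) + volume (S ∪ {z : Euc d | ¬ 0 ≤ a z}) :=
        measure_union_le _ _
    _ = volume (Function.support f) := by
        rw [measure_union_null hS hbad, add_zero]

/-! ### Integrability -/

lemma aux_Ahat_integrable {d : ℕ} {a : Euc d → ℝ} (ha_int : Integrable a) (y : Euc d) :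
    Integrable (fun z : Euc d => (1 - Real.cos (@inner ℝ _ _ z y)) * a z) := by
  have hcont : Continuous fun z : Euc d => 1 - Real.cos (@inner ℝ _ _ z y) :=
    continuous_const.sub (Real.continuous_cos.comp (continuous_id.inner continuous_const))
  exact ha_int.bdd_mul (c := 2) hcont.aestronglyMeasurable
    (Filter.Eventually.of_forall fun z => by
      rw [Real.norm_eq_abs]
      have h1 := Real.cos_le_one (@inner ℝ _ _ z y)
      have h2 := Real.neg_one_le_cos (@inner ℝ _ _ z y)
      rw [abs_le]; constructor <;> linarith)

lemma aux_Mquad_integrable {d : ℕ} {a : Euc d → ℝ} (ha_int : Integrable a)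
    (hM2 : Integrable fun x : Euc d => ‖x‖ ^ 2 * a x) (ξ : Euc d) :
    Integrable (fun z : Euc d => a z * (@inner ℝ _ _ z ξ) ^ 2) := by
  have hcont : Continuous fun z : Euc d => (@inner ℝ _ _ z ξ : ℝ) ^ 2 :=
    ((continuous_id.inner continuous_const)).pow 2
  refine (hM2.const_mul (‖ξ‖^2)).mono (ha_int.1.mul hcont.aestronglyMeasurable) ?_
  filter_upwards with z
  rw [Real.norm_eq_abs, Real.norm_eq_abs, abs_mul, abs_mul, abs_mul]
  have h1 : |(@inner ℝ _ _ z ξ : ℝ)^2| ≤ ‖z‖^2 * ‖ξ‖^2 := by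
    rw [abs_pow]
    calc |(@inner ℝ _ _ z ξ : ℝ)|^2 ≤ (‖z‖ * ‖ξ‖)^2 := by
          apply pow_le_pow_left₀ (abs_nonneg _) (abs_real_inner_le_norm z ξ)
      _ = ‖z‖^2 * ‖ξ‖^2 := by ring
  have h2 : |(‖z‖:ℝ)^2| = ‖z‖^2 := abs_of_nonneg (by positivity)
  have h3 : |(‖ξ‖:ℝ)^2| = ‖ξ‖^2 := abs_of_nonneg (by positivity)
  rw [h2, h3]
  nlinarith [abs_nonneg (a z), abs_nonneg (@inner ℝ _ _ z ξ : ℝ)]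

/-! ### Scaling of Mquad -/

lemma aux_Mquad_smul {d : ℕ} (a : Euc d → ℝ) (c : ℝ) (ξ : Euc d) :
    Mquad a (c • ξ) = c^2 * Mquad a ξ := by
  unfold Mquad
  rw [← integral_const_mul]
  congr 1
  funext z
  rw [real_inner_smul_right]
  ring


lemma aux_Mquad_ge {d : ℕ} {a : Euc d → ℝ} {Ma : ℝ}
    (hMa : IsLeast (Mquad a '' {θ : Euc d | ‖θ‖ = 1}) Ma) (ξ : Euc d) :
    Ma * ‖ξ‖^2 ≤ Mquad a ξ := by
  rcases eq_or_ne ξ 0 with rfl | hξ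
  · simp [Mquad, inner_zero_right]
  · set θ : Euc d := ‖ξ‖⁻¹ • ξ with hθdef
    have hθ : ‖θ‖ = 1 := norm_smul_inv_norm hξ
    have h1 : Ma ≤ Mquad a θ := hMa.2 ⟨θ, hθ, rfl⟩
    have h2 : Mquad a ξ = ‖ξ‖^2 * Mquad a θ := by
      have hs : (‖ξ‖ : ℝ) • θ = ξ := by
        rw [hθdef, smul_smul, mul_inv_cancel₀ (norm_ne_zero_iff.2 hξ), one_smul]
      conv_lhs => rw [← hs]
      rw [aux_Mquad_smul]
    rw [h2, mul_comm Ma (‖ξ‖^2)]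
    exact mul_le_mul_of_nonneg_left h1 (by positivity)

lemma aux_Ahat_taylor {d : ℕ} {a : Euc d → ℝ} (ha_int : Integrable a)
    (ha_nn : ∀ᵐ x : Euc d, 0 ≤ a x)
    (hM2 : Integrable fun x : Euc d => ‖x‖ ^ 2 * a x)
    (hM3 : Integrable fun x : Euc d => ‖x‖ ^ 3 * a x) (ξ : Euc d) :
    Mquad a ξ / 2 - ‖ξ‖^3 * (∫ z : Euc d, ‖z‖ ^ 3 * a z) / 6 ≤ Ahat a ξ := by
  have hint2 := aux_Mquad_integrable ha_int hM2 ξ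
  have hintf := aux_Ahat_integrable ha_int ξ
  have hintg : Integrable (fun z : Euc d =>
      a z * (@inner ℝ _ _ z ξ)^2 / 2 - ‖ξ‖^3/6 * (‖z‖^3 * a z)) :=
    (hint2.div_const 2).sub (hM3.const_mul _)
  have hle : ∀ᵐ z : Euc d,
      a z * (@inner ℝ _ _ z ξ)^2 / 2 - ‖ξ‖^3/6 * (‖z‖^3 * a z)
        ≤ (1 - Real.cos (@inner ℝ _ _ z ξ)) * a z := by
    filter_upwards [ha_nn] with z hz
    set t : ℝ := @inner ℝ _ _ z ξ with ht
    have h1 := aux_cos_le_taylor t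
    have h2 : |t| ≤ ‖z‖ * ‖ξ‖ := abs_real_inner_le_norm z ξ
    have h3 : |t|^3 ≤ ‖z‖^3 * ‖ξ‖^3 := by
      calc |t|^3 ≤ (‖z‖ * ‖ξ‖)^3 := pow_le_pow_left₀ (abs_nonneg t) h2 3
        _ = ‖z‖^3 * ‖ξ‖^3 := by ring
    have h4 : (t^2/2 - |t|^3/6) * a z ≤ (1 - Real.cos t) * a z :=
      mul_le_mul_of_nonneg_right (by linarith) hz
    have h5 : |t|^3 * a z ≤ ‖z‖^3 * ‖ξ‖^3 * a z :=
      mul_le_mul_of_nonneg_right h3 hz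
    nlinarith [h4, h5]
  have hmain := integral_mono_ae hintg hintf hle
  rw [integral_sub (hint2.div_const 2) (hM3.const_mul _), integral_div, integral_const_mul]
    at hmain
  unfold Ahat Mquad
  linarith

lemma aux_Ahat_pos {d : ℕ} {a : Euc d → ℝ} (ha_int : Integrable a)
    (ha_nn : ∀ᵐ x : Euc d, 0 ≤ a x) (ha_supp : 0 < volume {x : Euc d | a x ≠ 0})
    (y : Euc d) (hy : y ≠ 0) : 0 < Ahat a y := by
  unfold Ahat
  apply aux_integral_pos _ (aux_Ahat_integrable ha_int y) _ ha_nn ha_supp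
    {z : Euc d | Real.cos (@inner ℝ _ _ z y) = 1} (aux_cos_one_null y hy)
  · intro z hz hz' hzS
    have hlt : a z > 0 := lt_of_le_of_ne hz' (Ne.symm hz)
    have hcos : Real.cos (@inner ℝ _ _ z y) < 1 :=
      lt_of_le_of_ne (Real.cos_le_one _) hzS
    exact ne_of_gt (mul_pos (by linarith) hlt)
  · filter_upwards [ha_nn] with z hz
    have := Real.cos_le_one (@inner ℝ _ _ z y)
    exact mul_nonneg (by linarith) hz

lemma aux_Mquad_pos {d : ℕ} {a : Euc d → ℝ} (ha_int : Integrable a)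
    (ha_nn : ∀ᵐ x : Euc d, 0 ≤ a x) (ha_supp : 0 < volume {x : Euc d | a x ≠ 0})
    (hM2 : Integrable fun x : Euc d => ‖x‖ ^ 2 * a x)
    (θ : Euc d) (hθ : θ ≠ 0) : 0 < Mquad a θ := by
  unfold Mquad
  apply aux_integral_pos _ (aux_Mquad_integrable ha_int hM2 θ) _ ha_nn ha_supp
    {z : Euc d | @inner ℝ _ _ z θ = 0} (aux_hyperplane_null θ hθ 0)
  · intro z hz hz' hzS
    exact mul_ne_zero hz (pow_ne_zero 2 hzS)
  · filter_upwards [ha_nn] with z hz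
    exact mul_nonneg hz (sq_nonneg _)

lemma aux_M3_pos {d : ℕ} (hd : 1 ≤ d) {a : Euc d → ℝ}
    (ha_nn : ∀ᵐ x : Euc d, 0 ≤ a x) (ha_supp : 0 < volume {x : Euc d | a x ≠ 0})
    (hM3 : Integrable fun x : Euc d => ‖x‖ ^ 3 * a x) :
    0 < ∫ z : Euc d, ‖z‖ ^ 3 * a z := by
  set e : Euc d := EuclideanSpace.single (⟨0, hd⟩ : Fin d) (1:ℝ) with he
  have hee : e ⟨0, hd⟩ = 1 := by simp [he]
  have hene : e ≠ 0 := by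
    intro h
    rw [h] at hee
    simpa using hee
  apply aux_integral_pos _ hM3 _ ha_nn ha_supp
    {z : Euc d | @inner ℝ _ _ z e = 0} (aux_hyperplane_null e hene 0)
  · intro z hz hz' hzS
    have hzne : z ≠ 0 := by
      intro h
      exact hzS (by simp [h])
    exact mul_ne_zero (pow_ne_zero 3 (norm_ne_zero_iff.2 hzne)) hz
  · filter_upwards [ha_nn] with z hz
    exact mul_nonneg (by positivity) hz



/-- Lower bounds for the symbol on the dual torus: with
`C(a) = min{(1/4)𝓜(a), 𝒜_{r(a)}(a)/(π²d), 𝒜_π(a)/(π²d)} > 0`, one has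
(i) `Â(ξ + 2πn) ≥ C(a)|ξ|²` for all `ξ ∈ [-π,π)^d` and `n ∈ ℤ^d`, and
(ii) `Â(ξ + 2πn) ≥ 𝒜_π(a)` for `n ≠ 0`. -/
theorem stmt10 {d : ℕ} (hd : 1 ≤ d)
    (a : Euc d → ℝ)
    (ha_int : Integrable a)
    (ha_nn : ∀ᵐ x : Euc d, 0 ≤ a x)
    (ha_even : ∀ x : Euc d, a (-x) = a x)
    (ha_supp : 0 < volume {x : Euc d | a x ≠ 0})
    (hM1 : Integrable fun x : Euc d => ‖x‖ ^ 1 * a x)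
    (hM2 : Integrable fun x : Euc d => ‖x‖ ^ 2 * a x)
    (hM3 : Integrable fun x : Euc d => ‖x‖ ^ 3 * a x)
    (Ma Ar Api : ℝ)
    (hMa : IsLeast (Mquad a '' {θ : Euc d | ‖θ‖ = 1}) Ma)
    (hAr : IsLeast
      (Ahat a '' {y : Euc d | (3 / 2) * Ma / (∫ z : Euc d, ‖z‖ ^ 3 * a z) ≤ ‖y‖}) Ar)
    (hApi : IsLeast (Ahat a '' {y : Euc d | Real.pi ≤ ‖y‖}) Api) :
    0 < min (min ((1 / 4) * Ma) (Ar / (Real.pi ^ 2 * d))) (Api / (Real.pi ^ 2 * d)) ∧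
    (∀ ξ : Euc d, (∀ i, ξ i ∈ Set.Ico (-Real.pi) Real.pi) → ∀ n : Fin d → ℤ,
      min (min ((1 / 4) * Ma) (Ar / (Real.pi ^ 2 * d))) (Api / (Real.pi ^ 2 * d)) * ‖ξ‖ ^ 2
        ≤ Ahat a (ξ + latVec n)) ∧
    (∀ ξ : Euc d, (∀ i, ξ i ∈ Set.Ico (-Real.pi) Real.pi) → ∀ n : Fin d → ℤ, n ≠ 0 →
      Api ≤ Ahat a (ξ + latVec n)) := by
  set M3 : ℝ := ∫ z : Euc d, ‖z‖ ^ 3 * a z with hM3def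
  have hM3pos : 0 < M3 := aux_M3_pos hd ha_nn ha_supp hM3
  have hMapos : 0 < Ma := by
    obtain ⟨θ, hθmem, hθeq⟩ := hMa.1
    have hθne : θ ≠ 0 := by
      intro h
      rw [Set.mem_setOf_eq, h, norm_zero] at hθmem
      exact one_ne_zero hθmem.symm
    exact hθeq ▸ aux_Mquad_pos ha_int ha_nn ha_supp hM2 θ hθne
  have hArpos : 0 < Ar := by
    obtain ⟨y, hy, hyeq⟩ := hAr.1
    rw [Set.mem_setOf_eq] at hy
    have hyne : y ≠ 0 := by
      intro h
      rw [h, norm_zero] at hy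
      have : 0 < (3/2) * Ma / M3 := by positivity
      linarith
    exact hyeq ▸ aux_Ahat_pos ha_int ha_nn ha_supp y hyne
  have hApipos : 0 < Api := by
    obtain ⟨y, hy, hyeq⟩ := hApi.1
    rw [Set.mem_setOf_eq] at hy
    have hyne : y ≠ 0 := by
      intro h
      rw [h, norm_zero] at hy
      linarith [Real.pi_pos]
    exact hyeq ▸ aux_Ahat_pos ha_int ha_nn ha_supp y hyne
  have hdpos : (0:ℝ) < Real.pi ^ 2 * d := by
    have h1 : (1:ℝ) ≤ (d:ℝ) := by exact_mod_cast hd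
    nlinarith [Real.pi_pos]
  set C : ℝ := min (min ((1 / 4) * Ma) (Ar / (Real.pi ^ 2 * d))) (Api / (Real.pi ^ 2 * d))
    with hCdef
  have hCpos : 0 < C :=
    lt_min (lt_min (by positivity) (div_pos hArpos hdpos)) (div_pos hApipos hdpos)
  have hC1 : C ≤ (1/4) * Ma := (min_le_left _ _).trans (min_le_left _ _)
  have hC2 : C ≤ Ar / (Real.pi ^ 2 * d) := (min_le_left _ _).trans (min_le_right _ _)
  have hC3 : C ≤ Api / (Real.pi ^ 2 * d) := min_le_right _ _
  have key2 : ∀ ξ : Euc d, (∀ i, ξ i ∈ Set.Ico (-Real.pi) Real.pi) →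
      ∀ n : Fin d → ℤ, n ≠ 0 → Api ≤ Ahat a (ξ + latVec n) := by
    intro ξ hξ n hn
    exact hApi.2 ⟨ξ + latVec n, aux_norm_latVec ξ hξ n hn, rfl⟩
  refine ⟨hCpos, ?_, key2⟩
  intro ξ hξ n
  have hnorm2 : ‖ξ‖^2 ≤ Real.pi ^ 2 * d := aux_norm_sq_le ξ hξ
  by_cases hn : n = 0
  · subst hn
    have hlat : ξ + latVec (0 : Fin d → ℤ) = ξ := by
      have h0 : latVec (0 : Fin d → ℤ) = 0 := by
        ext i
        simp [latVec]
      rw [h0, add_zero]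
    rw [hlat]
    rcases le_or_gt ‖ξ‖ ((3/2) * Ma / M3) with hle | hgt
    · calc C * ‖ξ‖^2 ≤ ((1/4) * Ma) * ‖ξ‖^2 :=
            mul_le_mul_of_nonneg_right hC1 (by positivity)
        _ ≤ Ahat a ξ := by
            have ht := aux_Ahat_taylor ha_int ha_nn hM2 hM3 ξ
            rw [← hM3def] at ht
            have hq := aux_Mquad_ge hMa ξ
            have hM3le : ‖ξ‖ * M3 ≤ (3/2) * Ma := by
              rw [← le_div_iff₀ hM3pos]
              exact hle
            have hkey : ‖ξ‖ * M3 * ‖ξ‖^2 ≤ (3/2) * Ma * ‖ξ‖^2 :=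
              mul_le_mul_of_nonneg_right hM3le (sq_nonneg _)
            have hcube : ‖ξ‖^3 * M3 = ‖ξ‖ * M3 * ‖ξ‖^2 := by ring
            nlinarith [ht, hq, hkey]
    · have hAhat : Ar ≤ Ahat a ξ := hAr.2 ⟨ξ, hgt.le, rfl⟩
      calc C * ‖ξ‖^2 ≤ (Ar / (Real.pi ^ 2 * d)) * ‖ξ‖^2 :=
            mul_le_mul_of_nonneg_right hC2 (by positivity)
        _ ≤ Ar := by
            rw [div_mul_eq_mul_div, div_le_iff₀ hdpos]
            exact mul_le_mul_of_nonneg_left hnorm2 hArpos.le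
        _ ≤ Ahat a ξ := hAhat
  · have hAhat : Api ≤ Ahat a (ξ + latVec n) := key2 ξ hξ n hn
    calc C * ‖ξ‖^2 ≤ (Api / (Real.pi ^ 2 * d)) * ‖ξ‖^2 :=
          mul_le_mul_of_nonneg_right hC3 (by positivity)
      _ ≤ Api := by
          rw [div_mul_eq_mul_div, div_le_iff₀ hdpos]
          exact mul_le_mul_of_nonneg_left hnorm2 hApipos.le
      _ ≤ Ahat a (ξ + latVec n) := hAhat
end
end

section
/- Assume additionally a ∈ L²(ℝ^d). With ρ₀(a) = 2 M₃(a)^{1/3} ‖a‖_{L¹}^{-1/3}, κ_{d−1} the volume of the unit ball in ℝ^{d−1}, and r₀(a) = ((3/8)‖a‖_{L¹})² / (2 κ_{d−1} ρ₀(a)^{d−1} ‖a‖_{L²}²), one has for every unit vector θ ∈ ℝ^d: ∫_{ℝ^d} a(z) ⟨z, θ⟩² dz ≥ (1/2) ‖a‖_{L¹} r₀(a)². In particular 𝓜(a) = min_{|θ|=1} ∫ a(z)⟨z,θ⟩² dz ≥ (1/2) ‖a‖_{L¹} r₀(a)². -/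
open MeasureTheory Real
open scoped ENNReal

noncomputable section

/-- The radius `ρ₀(a) = 2 M₃(a)^{1/3} ‖a‖_{L¹}^{-1/3}`. -/
def rho0 {d : ℕ} (a : Euc d → ℝ) : ℝ :=
  2 * (∫ z : Euc d, ‖z‖ ^ 3 * a z) ^ ((1 : ℝ) / 3) * (∫ z : Euc d, a z) ^ (-(1 : ℝ) / 3)

/-- `κ_m`, the volume of the unit ball in `ℝ^m`. -/
def kappa (m : ℕ) : ℝ :=
  (volume (Metric.ball (0 : EuclideanSpace ℝ (Fin m)) 1)).toReal

/-- The radius `r₀(a) = ((3/8)‖a‖_{L¹})² / (2 κ_{d-1} ρ₀(a)^{d-1} ‖a‖_{L²}²)`. -/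
def r0 {d : ℕ} (a : Euc d → ℝ) : ℝ :=
  ((3 / 8) * ∫ z : Euc d, a z) ^ 2 /
    (2 * kappa (d - 1) * rho0 a ^ (d - 1) * ∫ z : Euc d, (a z) ^ 2)

lemma vol_slab_ball (n : ℕ) {r ρ : ℝ} (hρ : 0 ≤ ρ) :
    volume {x : Euc (n+1) | |x 0| ≤ r ∧ ‖x‖ ≤ ρ}
      ≤ ENNReal.ofReal (2*r) * (ENNReal.ofReal (ρ ^ n) * volume (Metric.ball (0 : Euc n) 1)) := by
  classical
  set e1 := (MeasurableEquiv.toLp 2 (Fin (n+1) → ℝ)).symm with he1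
  set e2 := MeasurableEquiv.piFinSuccAbove (fun _ : Fin (n+1) => ℝ) 0 with he2
  set e3 := (MeasurableEquiv.toLp 2 (Fin n → ℝ)).symm with he3
  set B' : Set (Fin n → ℝ) := e3.symm ⁻¹' (Metric.closedBall 0 ρ) with hB'def
  have hB' : MeasurableSet B' := e3.symm.measurable measurableSet_closedBall
  have hsub : {x : Euc (n+1) | |x 0| ≤ r ∧ ‖x‖ ≤ ρ}
      ⊆ (e2 ∘ e1) ⁻¹' (Set.Icc (-r) r ×ˢ B') := by
    rintro x ⟨h1, h2⟩
    have hx0 : (e2 (e1 x)).1 = x 0 := rfl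
    have hx1 : (e2 (e1 x)).2 = fun j : Fin n => x ((0 : Fin (n+1)).succAbove j) := rfl
    rw [Set.mem_preimage, Function.comp_apply, Set.mem_prod]
    constructor
    · rw [Set.mem_Icc, ← abs_le, hx0]; exact h1
    · show (e2 (e1 x)).2 ∈ B'
      rw [hB'def, Set.mem_preimage, Metric.mem_closedBall, dist_zero_right]
      refine le_trans ?_ h2
      rw [EuclideanSpace.norm_eq, EuclideanSpace.norm_eq]
      apply Real.sqrt_le_sqrt
      rw [Fin.sum_univ_succ]
      have hco : ∀ j : Fin n, ‖(e3.symm ((e2 (e1 x)).2)) j‖ = ‖x j.succ‖ := by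
        intro j
        rw [hx1]
        simp [Fin.zero_succAbove]
        rfl
      calc ∑ j : Fin n, ‖(e3.symm ((e2 (e1 x)).2)) j‖ ^ 2
          = ∑ j : Fin n, ‖x j.succ‖ ^ 2 := by
            refine Finset.sum_congr rfl fun j _ => ?_; rw [hco j]
        _ ≤ ‖x 0‖ ^ 2 + ∑ j : Fin n, ‖x j.succ‖ ^ 2 := le_add_of_nonneg_left (sq_nonneg _)
  calc volume {x : Euc (n+1) | |x 0| ≤ r ∧ ‖x‖ ≤ ρ}
      ≤ volume ((e2 ∘ e1) ⁻¹' (Set.Icc (-r) r ×ˢ B')) := measure_mono hsub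
    _ = volume (Set.Icc (-r) r ×ˢ B') := by
        exact ((volume_preserving_piFinSuccAbove (fun _ : Fin (n+1) => ℝ) 0).comp
          (EuclideanSpace.volume_preserving_symm_measurableEquiv_toLp (Fin (n+1)))).measure_preimage
          ((measurableSet_Icc.prod hB').nullMeasurableSet)
    _ = volume (Set.Icc (-r) r) * volume B' := by
        rw [show (volume : Measure (ℝ × (Fin n → ℝ))) = Measure.prod volume volume from rfl,
          Measure.prod_prod]
    _ = ENNReal.ofReal (2*r) * volume (Metric.closedBall (0 : Euc n) ρ) := by
        rw [Real.volume_Icc, hB'def,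
          (MeasurePreserving.symm _
            (EuclideanSpace.volume_preserving_symm_measurableEquiv_toLp (Fin n))).measure_preimage
            measurableSet_closedBall.nullMeasurableSet]
        norm_num [two_mul]
    _ = ENNReal.ofReal (2*r) * (ENNReal.ofReal (ρ ^ n) * volume (Metric.ball (0 : Euc n) 1)) := by
        rw [Measure.addHaar_closedBall _ _ hρ, finrank_euclideanSpace_fin]

lemma cs_set_integral {d : ℕ} {a : Euc d → ℝ}
    (ha_L2 : MemLp a 2 (volume : Measure (Euc d))) (ha_nn : ∀ᵐ x : Euc d, 0 ≤ a x)
    {T : Set (Euc d)} (hT : MeasurableSet T) (hTfin : volume T ≠ ⊤) :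
    ∫ z in T, a z ≤ (∫ z : Euc d, (a z)^2) ^ ((1:ℝ)/2) * ((volume T).toReal) ^ ((1:ℝ)/2) := by
  classical
  set g : Euc d → ℝ := T.indicator (fun _ => (1:ℝ)) with hg_def
  have hpq : Real.HolderConjugate 2 2 := Real.HolderConjugate.two_two
  have hg_nn : 0 ≤ᵐ[(volume : Measure (Euc d))] g :=
    Filter.Eventually.of_forall fun x => Set.indicator_nonneg (fun _ _ => zero_le_one) x
  have hf2 : MemLp a (ENNReal.ofReal 2) (volume : Measure (Euc d)) := by
    rw [show ENNReal.ofReal (2:ℝ) = 2 by norm_num]; exact ha_L2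
  have hg2 : MemLp g (ENNReal.ofReal 2) (volume : Measure (Euc d)) := by
    rw [show ENNReal.ofReal (2:ℝ) = 2 by norm_num]
    exact memLp_indicator_const 2 hT 1 (Or.inr hTfin)
  have h := integral_mul_le_Lp_mul_Lq_of_nonneg hpq ha_nn hg_nn hf2 hg2
  have hsq : ∀ x : ℝ, x ^ (2:ℝ) = x ^ 2 := fun x => by
    rw [show (2:ℝ) = ((2:ℕ):ℝ) by norm_num, Real.rpow_natCast]
  have hL : ∫ z, a z * g z = ∫ z in T, a z := by
    have : (fun z => a z * g z) = T.indicator a := by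
      funext z; by_cases hz : z ∈ T <;> simp [hg_def, Set.indicator_apply, hz]
    rw [this, integral_indicator hT]
  have hR1 : (∫ z, a z ^ (2:ℝ)) = ∫ z, (a z)^2 := by simp_rw [hsq]
  have hR2 : (∫ z, g z ^ (2:ℝ)) = (volume T).toReal := by
    have : (fun z => g z ^ (2:ℝ)) = T.indicator (fun _ => (1:ℝ)) := by
      funext z; by_cases hz : z ∈ T <;>
        simp [hg_def, Set.indicator_apply, hz, Real.zero_rpow (by norm_num : (2:ℝ) ≠ 0)]
    rw [this, integral_indicator_const (1:ℝ) hT]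
    simp [Measure.real]
  rw [hL, hR1, hR2] at h
  exact h

/-- Lower bound for the quadratic moment in every direction: for every unit vector `θ`,
`∫ a(z) ⟨z,θ⟩² dz ≥ (1/2) ‖a‖_{L¹} r₀(a)²`; in particular
`𝓜(a) = min_{|θ|=1} ∫ a(z)⟨z,θ⟩² dz ≥ (1/2) ‖a‖_{L¹} r₀(a)²`. -/
theorem stmt18 {d : ℕ} (hd : 1 ≤ d)
    (a : Euc d → ℝ)
    (ha_int : Integrable a)
    (ha_L2 : MemLp a 2 (volume : Measure (Euc d)))
    (ha_nn : ∀ᵐ x : Euc d, 0 ≤ a x)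
    (ha_even : ∀ x : Euc d, a (-x) = a x)
    (ha_supp : 0 < volume {x : Euc d | a x ≠ 0})
    (hM1 : Integrable fun x : Euc d => ‖x‖ ^ 1 * a x)
    (hM2 : Integrable fun x : Euc d => ‖x‖ ^ 2 * a x)
    (hM3 : Integrable fun x : Euc d => ‖x‖ ^ 3 * a x) :
    (∀ θ : Euc d, ‖θ‖ = 1 →
      (1 / 2) * (∫ z : Euc d, a z) * r0 a ^ 2 ≤ Mquad a θ) ∧
    (1 / 2) * (∫ z : Euc d, a z) * r0 a ^ 2
      ≤ sInf (Mquad a '' {θ : Euc d | ‖θ‖ = 1}) := by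
  classical
  obtain ⟨n, rfl⟩ : ∃ n, d = n + 1 := ⟨d - 1, (Nat.succ_pred_eq_of_pos hd).symm⟩
  set m := ∫ z : Euc (n+1), a z with hm_def
  set M3 := ∫ z : Euc (n+1), ‖z‖ ^ 3 * a z with hM3_def
  set A2 := ∫ z : Euc (n+1), (a z) ^ 2 with hA2_def
  have hm_pos : 0 < m :=
    (integral_pos_iff_support_of_nonneg_ae ha_nn ha_int).2 ha_supp
  have hM3_pos : 0 < M3 := by
    rw [hM3_def]
    refine (integral_pos_iff_support_of_nonneg_ae ?_ hM3).2 ?_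
    · filter_upwards [ha_nn] with z hz; positivity
    · have hss : {x : Euc (n+1) | a x ≠ 0} \ {0}
          ⊆ Function.support fun x : Euc (n+1) => ‖x‖ ^ 3 * a x := by
        rintro z ⟨hz1, hz2⟩
        have hz0 : z ≠ 0 := by simpa using hz2
        have hnz : ‖z‖ ≠ 0 := by simpa using hz0
        simp only [Function.mem_support]
        exact mul_ne_zero (pow_ne_zero _ hnz) hz1
      have h0 : 0 < volume ({x : Euc (n+1) | a x ≠ 0} \ {0}) := by
        rwa [measure_diff_null (measure_singleton 0)]
      exact h0.trans_le (measure_mono hss)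
  have hA2_int : Integrable (fun z : Euc (n+1) => (a z) ^ 2) := ha_L2.integrable_sq
  have hA2_pos : 0 < A2 := by
    rw [hA2_def]
    refine (integral_pos_iff_support_of_nonneg_ae
      (Filter.Eventually.of_forall fun z => sq_nonneg _) hA2_int).2 ?_
    refine lt_of_lt_of_le ha_supp (measure_mono ?_)
    intro z hz
    simp only [Function.mem_support]
    exact pow_ne_zero _ hz
  have hκ_pos : 0 < kappa n :=
    ENNReal.toReal_pos (Metric.measure_ball_pos _ _ one_pos).ne' measure_ball_lt_top.ne
  have hρ_def : rho0 a = 2 * M3 ^ ((1:ℝ)/3) * m ^ (-(1:ℝ)/3) := by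
    rw [rho0, hm_def, hM3_def]
  have hρ_pos : 0 < rho0 a := by
    rw [hρ_def]
    exact mul_pos (mul_pos two_pos (Real.rpow_pos_of_pos hM3_pos _))
      (Real.rpow_pos_of_pos hm_pos _)
  have hρ3 : rho0 a ^ 3 = 8 * M3 * m⁻¹ := by
    rw [hρ_def, mul_pow, mul_pow, ← Real.rpow_natCast (M3 ^ ((1:ℝ)/3)) 3,
      ← Real.rpow_natCast (m ^ (-(1:ℝ)/3)) 3,
      ← Real.rpow_mul hM3_pos.le, ← Real.rpow_mul hm_pos.le]
    norm_num [Real.rpow_neg_one]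
  have hr_def : r0 a = ((3/8) * m) ^ 2 / (2 * kappa n * rho0 a ^ n * A2) := by
    rw [r0, hm_def, hA2_def]
    norm_num
  have hD_pos : 0 < 2 * kappa n * rho0 a ^ n * A2 :=
    mul_pos (mul_pos (mul_pos two_pos hκ_pos) (pow_pos hρ_pos n)) hA2_pos
  have hr_pos : 0 < r0 a := by
    rw [hr_def]
    exact div_pos (pow_pos (by linarith) 2) hD_pos
  have hrD : (2 * kappa n * rho0 a ^ n * A2) * r0 a = ((3/8) * m) ^ 2 := by
    rw [hr_def]; field_simp
  -- Markov inequality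
  set U : Set (Euc (n+1)) := {z | rho0 a < ‖z‖} with hU_def
  have hU : MeasurableSet U := measurableSet_lt measurable_const continuous_norm.measurable
  have hmarkov : ∫ z in U, a z ≤ m / 8 := by
    have step1 : rho0 a ^ 3 * ∫ z in U, a z ≤ ∫ z in U, ‖z‖ ^ 3 * a z := by
      rw [← integral_const_mul]
      refine setIntegral_mono_ae_restrict ((ha_int.const_mul _).integrableOn)
        hM3.integrableOn ?_
      filter_upwards [ae_restrict_of_ae ha_nn, ae_restrict_mem hU] with z hz hzU
      have h3 : rho0 a ^ 3 ≤ ‖z‖ ^ 3 := pow_le_pow_left₀ hρ_pos.le (le_of_lt hzU) 3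
      exact mul_le_mul_of_nonneg_right h3 hz
    have step2 : ∫ z in U, ‖z‖ ^ 3 * a z ≤ M3 := by
      rw [hM3_def]
      refine setIntegral_le_integral hM3 ?_
      filter_upwards [ha_nn] with z hz; positivity
    have h4 : ∫ z in U, a z ≤ M3 / rho0 a ^ 3 := by
      rw [le_div_iff₀ (pow_pos hρ_pos 3)]
      calc (∫ z in U, a z) * rho0 a ^ 3 = rho0 a ^ 3 * ∫ z in U, a z := by ring
        _ ≤ ∫ z in U, ‖z‖ ^ 3 * a z := step1
        _ ≤ M3 := step2
    refine h4.trans (le_of_eq ?_)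
    rw [hρ3]
    field_simp
  -- main bound for each unit vector
  have key : ∀ θ : Euc (n+1), ‖θ‖ = 1 →
      (1 / 2) * m * r0 a ^ 2 ≤ Mquad a θ := by
    intro θ hθ
    have hinner_cont : Continuous fun z : Euc (n+1) => (@inner ℝ _ _ z θ : ℝ) :=
      continuous_id.inner continuous_const
    set S : Set (Euc (n+1)) := {z | |(@inner ℝ _ _ z θ : ℝ)| ≤ r0 a} with hS_def
    have hS : MeasurableSet S := measurableSet_le hinner_cont.abs.measurable measurable_const
    set B : Set (Euc (n+1)) := Metric.closedBall 0 (rho0 a) with hB_def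
    have hT : MeasurableSet (S ∩ B) := hS.inter measurableSet_closedBall
    have hTfin : volume (S ∩ B) ≠ ⊤ :=
      ((measure_mono Set.inter_subset_right).trans_lt measure_closedBall_lt_top).ne
    -- rotate θ to the first coordinate
    have hcard : Module.finrank ℝ (Euc (n+1)) = Fintype.card (Fin (n+1)) := by
      simp [finrank_euclideanSpace_fin]
    have horth : Orthonormal ℝ (({0} : Set (Fin (n+1))).restrict (fun _ => θ)) := by
      constructor
      · intro i; exact hθ
      · intro i j hij
        have hi := i.2; have hj := j.2
        simp only [Set.mem_singleton_iff] at hi hj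
        exact absurd (Subtype.ext (hi.trans hj.symm)) hij
    obtain ⟨bb, hbb⟩ := Orthonormal.exists_orthonormalBasis_extension_of_card_eq hcard horth
    have hbθ : bb 0 = θ := hbb 0 rfl
    have hpre : S ∩ B = bb.repr ⁻¹' {x : Euc (n+1) | |x 0| ≤ r0 a ∧ ‖x‖ ≤ rho0 a} := by
      ext z
      simp only [Set.mem_inter_iff, Set.mem_preimage, Set.mem_setOf_eq, hS_def, hB_def,
        Metric.mem_closedBall, dist_zero_right]
      rw [OrthonormalBasis.repr_apply_apply, hbθ, real_inner_comm, bb.repr.norm_map]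
    have hset_meas : MeasurableSet {x : Euc (n+1) | |x 0| ≤ r0 a ∧ ‖x‖ ≤ rho0 a} := by
      have hm1 : Measurable fun x : Euc (n+1) => x 0 :=
        (measurable_pi_apply (0 : Fin (n+1))).comp
          (MeasurableEquiv.toLp 2 (Fin (n+1) → ℝ)).symm.measurable
      exact (measurableSet_le hm1.abs measurable_const).inter
        (measurableSet_le measurable_norm measurable_const)
    have hvol : volume (S ∩ B) ≤ ENNReal.ofReal (2 * r0 a) *
        (ENNReal.ofReal (rho0 a ^ n) * volume (Metric.ball (0 : Euc n) 1)) := by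
      rw [hpre, bb.measurePreserving_repr.measure_preimage hset_meas.nullMeasurableSet]
      exact vol_slab_ball n hρ_pos.le
    have hvol' : (volume (S ∩ B)).toReal ≤ 2 * r0 a * (rho0 a ^ n * kappa n) := by
      have hRfin : ENNReal.ofReal (2 * r0 a) *
          (ENNReal.ofReal (rho0 a ^ n) * volume (Metric.ball (0 : Euc n) 1)) ≠ ⊤ :=
        ENNReal.mul_ne_top ENNReal.ofReal_ne_top
          (ENNReal.mul_ne_top ENNReal.ofReal_ne_top measure_ball_lt_top.ne)
      have h := ENNReal.toReal_mono hRfin hvol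
      rw [ENNReal.toReal_mul, ENNReal.toReal_mul,
        ENNReal.toReal_ofReal (by positivity : (0:ℝ) ≤ 2 * r0 a),
        ENNReal.toReal_ofReal (by positivity : (0:ℝ) ≤ rho0 a ^ n)] at h
      rw [kappa]
      exact h
    -- Cauchy-Schwarz bound on the slab ∩ ball
    have hcs : ∫ z in S ∩ B, a z ≤ (3/8) * m := by
      have h1 := cs_set_integral ha_L2 ha_nn hT hTfin
      rw [← hA2_def] at h1
      have h2 : ((volume (S ∩ B)).toReal) ^ ((1:ℝ)/2)
          ≤ (2 * r0 a * (rho0 a ^ n * kappa n)) ^ ((1:ℝ)/2) :=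
        Real.rpow_le_rpow ENNReal.toReal_nonneg hvol' (by norm_num)
      have h38 : (0:ℝ) ≤ (3/8) * m := by linarith
      calc ∫ z in S ∩ B, a z
          ≤ A2 ^ ((1:ℝ)/2) * ((volume (S ∩ B)).toReal) ^ ((1:ℝ)/2) := h1
        _ ≤ A2 ^ ((1:ℝ)/2) * (2 * r0 a * (rho0 a ^ n * kappa n)) ^ ((1:ℝ)/2) := by
            exact mul_le_mul_of_nonneg_left h2 (Real.rpow_nonneg hA2_pos.le _)
        _ = (A2 * (2 * r0 a * (rho0 a ^ n * kappa n))) ^ ((1:ℝ)/2) := by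
            rw [← Real.mul_rpow hA2_pos.le (by positivity)]
        _ = (((3/8) * m) ^ 2) ^ ((1:ℝ)/2) := by
            rw [show A2 * (2 * r0 a * (rho0 a ^ n * kappa n))
              = (2 * kappa n * rho0 a ^ n * A2) * r0 a by ring, hrD]
        _ = (3/8) * m := by
            rw [← Real.rpow_natCast ((3/8)*m) 2, ← Real.rpow_mul h38]
            norm_num
    -- mass outside the ball
    have hdiff : ∫ z in S \ B, a z ≤ m / 8 := by
      refine le_trans (setIntegral_mono_set ha_int.integrableOn
        (ae_restrict_of_ae ha_nn) ?_) hmarkov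
      refine (HasSubset.Subset.eventuallyLE ?_ : _ ≤ᵐ[volume] U)
      intro z hz
      have : ¬ ‖z‖ ≤ rho0 a := by
        simpa [hB_def, Metric.mem_closedBall, dist_zero_right] using hz.2
      exact lt_of_not_ge this
    have hsplit : (∫ z in S ∩ B, a z) + ∫ z in S \ B, a z = ∫ z in S, a z :=
      integral_inter_add_diff (show MeasurableSet B from measurableSet_closedBall)
        ha_int.integrableOn
    have hcompl : m / 2 ≤ ∫ z in Sᶜ, a z := by
      have hadd : (∫ z in S, a z) + ∫ z in Sᶜ, a z = ∫ z : Euc (n+1), a z :=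
        integral_add_compl hS ha_int
      rw [← hm_def] at hadd
      have hslab : ∫ z in S, a z ≤ m / 2 := by
        rw [← hsplit]; linarith
      linarith
    -- final comparison
    have hf_meas : AEStronglyMeasurable
        (fun z : Euc (n+1) => a z * (@inner ℝ _ _ z θ : ℝ) ^ 2) volume :=
      ha_int.aestronglyMeasurable.mul (hinner_cont.pow 2).aestronglyMeasurable
    have hip_le : ∀ z : Euc (n+1), (@inner ℝ _ _ z θ : ℝ) ^ 2 ≤ ‖z‖ ^ 2 := by
      intro z
      have h := abs_real_inner_le_norm z θ
      rw [hθ, mul_one] at h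
      calc (@inner ℝ _ _ z θ : ℝ) ^ 2 = |(@inner ℝ _ _ z θ : ℝ)| ^ 2 := (sq_abs _).symm
        _ ≤ ‖z‖ ^ 2 := pow_le_pow_left₀ (abs_nonneg _) h 2
    have hf_int : Integrable (fun z : Euc (n+1) => a z * (@inner ℝ _ _ z θ : ℝ) ^ 2) := by
      refine hM2.mono hf_meas ?_
      filter_upwards [ha_nn] with z hz
      rw [Real.norm_eq_abs, Real.norm_eq_abs,
        abs_of_nonneg (mul_nonneg hz (sq_nonneg _)),
        abs_of_nonneg (mul_nonneg (by positivity) hz)]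
      calc a z * (@inner ℝ _ _ z θ : ℝ) ^ 2 ≤ a z * ‖z‖ ^ 2 :=
            mul_le_mul_of_nonneg_left (hip_le z) hz
        _ = ‖z‖ ^ 2 * a z := by ring
    have hf_nn : 0 ≤ᵐ[(volume : Measure (Euc (n+1)))]
        fun z : Euc (n+1) => a z * (@inner ℝ _ _ z θ : ℝ) ^ 2 := by
      filter_upwards [ha_nn] with z hz
      exact mul_nonneg hz (sq_nonneg _)
    have h5 : ∫ z in Sᶜ, a z * (@inner ℝ _ _ z θ : ℝ) ^ 2 ≤ Mquad a θ := by
      rw [Mquad]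
      exact setIntegral_le_integral hf_int hf_nn
    have h4 : r0 a ^ 2 * ∫ z in Sᶜ, a z ≤ ∫ z in Sᶜ, a z * (@inner ℝ _ _ z θ : ℝ) ^ 2 := by
      rw [← integral_const_mul]
      refine setIntegral_mono_ae_restrict ((ha_int.const_mul _).integrableOn)
        hf_int.integrableOn ?_
      filter_upwards [ae_restrict_of_ae ha_nn, ae_restrict_mem hS.compl] with z hz hzS
      have hzS' : r0 a < |(@inner ℝ _ _ z θ : ℝ)| := by
        by_contra hcon
        exact hzS (by simpa [hS_def] using not_lt.1 hcon)
      have hsq : r0 a ^ 2 ≤ (@inner ℝ _ _ z θ : ℝ) ^ 2 := by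
        rw [← sq_abs (@inner ℝ _ _ z θ : ℝ)]
        exact pow_le_pow_left₀ hr_pos.le hzS'.le 2
      calc r0 a ^ 2 * a z ≤ (@inner ℝ _ _ z θ : ℝ) ^ 2 * a z :=
            mul_le_mul_of_nonneg_right hsq hz
        _ = a z * (@inner ℝ _ _ z θ : ℝ) ^ 2 := by ring
    have h6 : r0 a ^ 2 * (m / 2) ≤ r0 a ^ 2 * ∫ z in Sᶜ, a z :=
      mul_le_mul_of_nonneg_left hcompl (sq_nonneg _)
    calc (1/2) * m * r0 a ^ 2 = r0 a ^ 2 * (m / 2) := by ring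
      _ ≤ r0 a ^ 2 * ∫ z in Sᶜ, a z := h6
      _ ≤ ∫ z in Sᶜ, a z * (@inner ℝ _ _ z θ : ℝ) ^ 2 := h4
      _ ≤ Mquad a θ := h5
  refine ⟨key, ?_⟩
  have hne : (Mquad a '' {θ : Euc (n+1) | ‖θ‖ = 1}).Nonempty := by
    refine ⟨Mquad a (EuclideanSpace.single (0 : Fin (n+1)) (1:ℝ)), ⟨_, ?_, rfl⟩⟩
    simp [EuclideanSpace.norm_single]
  refine le_csInf hne ?_
  rintro b ⟨θ, hθ, rfl⟩
  exact key θ hθ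
end
end
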